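/- arXiv:1207.1258 — 4 statements merged into one kernel-verified Lean document; each statement's English description precedes it below -/
import Mathlib

section
/- Let F be a differential field with constant subfield K. Elements y₁,…,y_r of F are linearly dependent over K if and only if the columns of the Wronski matrix Y, whose (i,j) entry is y_j^{(i-1)} for 1 ≤ i,j ≤ r, are linearly dependent over F. -/
def IsDeriv {F : Type*} [Field F] (d : F → F) : Prop :=
  (∀ a b, d (a + b) = d a + d b) ∧ (∀ a b, d (a * b) = d a * b + a * d b)

/-!
Constant coefficients pass through the derivation, so a relation with constant coefficients is
annihilated by every row of the Wronski matrix. Conversely, let `c ≠ 0` be annihilated by the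
first `n` rows and supported on `n` indices. Scale `c` so that one of its entries is `1`. If the
entries of `c` are constants we are done. Otherwise, by the Leibniz rule, the nonzero vector of
derivatives `c'` is annihilated by the first `n - 1` rows, and it vanishes where `c` equals `1`,
so it is supported on `n - 1` indices and induction applies.
-/

open Finset Function

def IsDeriv.toDerivation {F : Type*} [Field F] {d : F → F} (hd : IsDeriv d) :
    Derivation ℤ F F :=
  Derivation.mk' (AddMonoidHom.mk' d hd.1).toIntLinearMap fun a b => by
    show d (a * b) = a * d b + b * d a
    rw [hd.2, add_comm, mul_comm b]

namespace Derivation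

variable {R : Type*} [CommRing R] {ι : Type*}

section CommRing

variable {A : Type*} [CommRing A] [Algebra R A] (D : Derivation R A A)

theorem iterate_mul_of_map_eq_zero {a : A} (ha : D a = 0) (b : A) (n : ℕ) :
    D^[n] (a * b) = a * D^[n] b := by
  induction n with
  | zero => rfl
  | succ n ih => simp [iterate_succ_apply', ih, D.leibniz, ha]

theorem iterate_map_sum (s : Finset ι) (f : ι → A) (n : ℕ) :
    D^[n] (∑ j ∈ s, f j) = ∑ j ∈ s, D^[n] (f j) := by
  induction n with
  | zero => rfl
  | succ n ih => simp only [iterate_succ_apply', ih, map_sum]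

variable [Fintype ι]

theorem sum_iterate_mul_eq_zero_of_forall_map_eq_zero {y c : ι → A} (hc : ∀ j, D (c j) = 0)
    (hsum : ∑ j, c j * y j = 0) (n : ℕ) : ∑ j, D^[n] (y j) * c j = 0 := by
  have h := congrArg D^[n] hsum
  simp only [D.iterate_map_sum, D.iterate_mul_of_map_eq_zero (hc _), iterate_fixed D.map_zero]
    at h
  simpa only [mul_comm] using h

theorem map_sum_iterate_mul (y c : ι → A) (n : ℕ) :
    D (∑ j, D^[n] (y j) * c j) = ∑ j, D^[n + 1] (y j) * c j + ∑ j, D^[n] (y j) * D (c j) := by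
  simp only [map_sum, D.leibniz, smul_eq_mul, iterate_succ_apply', ← sum_add_distrib]
  exact sum_congr rfl fun j _ => by ring

end CommRing

section Field

variable {F : Type*} [Field F] [Algebra R F] (D : Derivation R F F) [Fintype ι]

theorem exists_const_coeffs_of_sum_iterate_mul_eq_zero (y : ι → F) (s : Finset ι) (c : ι → F)
    (hc : c ≠ 0) (hcs : support c ⊆ s) (hrows : ∀ i < #s, ∑ j, D^[i] (y j) * c j = 0) :
    ∃ c' : ι → F, c' ≠ 0 ∧ support c' ⊆ s ∧ (∀ j, D (c' j) = 0) ∧ ∑ j, c' j * y j = 0 := by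
  classical
  induction s using Finset.strongInduction generalizing c with
  | H s ih =>
  obtain ⟨j₀, hj₀⟩ := Function.ne_iff.mp hc
  have hj₀s : j₀ ∈ s := hcs hj₀
  set b : ι → F := fun j => c j / c j₀
  have hb₀ : b j₀ = 1 := div_self hj₀
  have hbs : support b ⊆ s := fun j hj => hcs (div_ne_zero_iff.mp hj).1
  have hbrows : ∀ i < #s, ∑ j, D^[i] (y j) * b j = 0 := fun i hi => by
    simp only [b, ← mul_div_assoc, ← sum_div, hrows i hi, zero_div]
  by_cases hconst : ∀ j, D (b j) = 0
  · refine ⟨b, ne_of_apply_ne (· j₀) (by simp [hb₀]), hbs, hconst, ?_⟩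
    simpa only [iterate_zero_apply, mul_comm] using hbrows 0 (card_pos.mpr ⟨j₀, hj₀s⟩)
  have hDb : (fun j => D (b j)) ≠ 0 := fun h => hconst (congrFun h)
  have hDbs : support (fun j => D (b j)) ⊆ s.erase j₀ := fun j hj => by
    have hj' : j ≠ j₀ := by rintro rfl; simp [hb₀] at hj
    exact mem_erase.mpr ⟨hj', hbs (support_comp_subset D.map_zero b hj)⟩
  have hDbrows : ∀ i < #(s.erase j₀), ∑ j, D^[i] (y j) * D (b j) = 0 := fun i hi => by
    rw [card_erase_of_mem hj₀s] at hi
    have h := D.map_sum_iterate_mul y b i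
    rwa [hbrows i (by omega), hbrows (i + 1) (by omega), D.map_zero, zero_add, eq_comm] at h
  obtain ⟨c', hc', hc's, hc'const, hc'sum⟩ :=
    ih _ (erase_ssubset hj₀s) _ hDb hDbs hDbrows
  exact ⟨c', hc', hc's.trans (by simp), hc'const, hc'sum⟩

end Field

end Derivation

/-- Frobenius' theorem: `y₁,…,y_r` are linearly dependent over the constants of a
differential field iff the columns of their Wronski matrix are linearly dependent over `F`. -/
theorem frobenius_wronskian {F : Type*} [Field F] (d : F → F) (hd : IsDeriv d)
    {r : ℕ} (y : Fin r → F) :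
    (∃ c : Fin r → F, c ≠ 0 ∧ (∀ i, d (c i) = 0) ∧ ∑ i, c i * y i = 0) ↔
    (∃ c : Fin r → F, c ≠ 0 ∧
      (Matrix.of fun i j : Fin r => d^[(i : ℕ)] (y j)).mulVec c = 0) := by
  have hmulVec (c : Fin r → F) (i : Fin r) :
      (Matrix.of fun i j : Fin r => d^[(i : ℕ)] (y j)).mulVec c i = ∑ j, d^[i] (y j) * c j :=
    rfl
  constructor
  · rintro ⟨c, hc, hconst, hsum⟩
    refine ⟨c, hc, funext fun i => ?_⟩
    rw [hmulVec]
    exact hd.toDerivation.sum_iterate_mul_eq_zero_of_forall_map_eq_zero hconst hsum i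
  · rintro ⟨c, hc, hW⟩
    obtain ⟨c', hc', -, hconst, hsum⟩ :=
      hd.toDerivation.exists_const_coeffs_of_sum_iterate_mul_eq_zero y univ c hc (by simp)
        fun i hi => (hmulVec c _).symm.trans (congrFun hW ⟨i, by simpa using hi⟩)
    exact ⟨c', hc', hconst, hsum⟩
end

section
/- Let F be a differential field with constants K, and let M be an n×n matrix over F. Then M can be written as M = Σ_{j=1}^k f_j C_j with f_j ∈ F and pairwise commuting constant matrices C_j ∈ K^{n×n} (Type 1) if and only if all derivatives of M pairwise commute: M^{(i)} M^{(j)} = M^{(j)} M^{(i)} for all nonnegative integers i, j. -/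
/-- `M` is of Type 1: an `F`-linear combination of pairwise commuting matrices
with constant entries. -/
def IsType1 {F : Type*} [Field F] (d : F → F) {n : ℕ}
    (M : Matrix (Fin n) (Fin n) F) : Prop :=
  ∃ (k : ℕ) (f : Fin k → F) (C : Fin k → Matrix (Fin n) (Fin n) F),
    (∀ j p q, d (C j p q) = 0) ∧
    (∀ i j, C i * C j = C j * C i) ∧
    M = ∑ j, f j • C j

section Aux

variable {F : Type*} [Field F] {d : F → F}

lemma IsDeriv.zero (hd : IsDeriv d) : d 0 = 0 := by
  have h := hd.1 0 0
  rw [add_zero] at h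
  exact (left_eq_add.mp h)

lemma IsDeriv.iter_add (hd : IsDeriv d) (i : ℕ) (a b : F) :
    d^[i] (a + b) = d^[i] a + d^[i] b := by
  induction i generalizing a b with
  | zero => simp
  | succ i ih =>
    simp only [Function.iterate_succ_apply]
    rw [hd.1, ih]

lemma IsDeriv.iter_mul_const (hd : IsDeriv d) (i : ℕ) (a c : F) (hc : d c = 0) :
    d^[i] (a * c) = d^[i] a * c := by
  induction i generalizing a with
  | zero => simp
  | succ i ih =>
    simp only [Function.iterate_succ_apply]
    rw [hd.2, hc, mul_zero, add_zero, ih]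

/-- Key lemma: a derivation-stable subspace of `ι → F` is spanned by its constant vectors.
Version with an auxiliary bound for induction. -/
lemma span_const_aux (hd : IsDeriv d) {ι : Type*} [Fintype ι] [DecidableEq ι] :
    ∀ (N : ℕ) (s : Finset ι), s.card ≤ N → ∀ (W : Submodule F (ι → F)),
      (∀ w ∈ W, (fun i => d (w i)) ∈ W) →
      (∀ w ∈ W, ∀ i, w i ≠ 0 → i ∈ s) →
      ∀ w ∈ W, w ∈ Submodule.span F {v : ι → F | v ∈ W ∧ ∀ i, d (v i) = 0} := by
  classical
  intro N
  induction N with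
  | zero =>
    intro s hs W _ hsupp w hw
    have hwz : w = 0 := by
      funext i
      by_contra h
      have := hsupp w hw i h
      have : s.Nonempty := ⟨i, this⟩
      have := Finset.card_pos.mpr this
      omega
    rw [hwz]; exact Submodule.zero_mem _
  | succ N ih =>
    intro s hs W hD hsupp w hw
    by_cases hex : ∃ u ∈ W, u ≠ 0
    · -- pick a nonzero element of minimal support
      obtain ⟨u0, hu0W, hu0⟩ := hex
      set T : Set ℕ :=
        {m | ∃ u, u ∈ W ∧ u ≠ 0 ∧ (Finset.univ.filter fun i => u i ≠ 0).card = m} with hTdef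
      have hT : T.Nonempty := ⟨_, u0, hu0W, hu0, rfl⟩
      obtain ⟨w0, hw0W, hw0ne, hw0card⟩ := Nat.sInf_mem hT
      have hmin : ∀ u, u ∈ W → u ≠ 0 →
          (Finset.univ.filter fun i => w0 i ≠ 0).card ≤
          (Finset.univ.filter fun i => u i ≠ 0).card := by
        intro u hu hune
        rw [hw0card]
        exact Nat.sInf_le ⟨u, hu, hune, rfl⟩
      obtain ⟨i0, hi0⟩ : ∃ i, w0 i ≠ 0 := by
        by_contra h
        push_neg at h
        exact hw0ne (funext fun i => by simpa using h i)
      set w1 : ι → F := (w0 i0)⁻¹ • w0 with hw1def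
      have hw1W : w1 ∈ W := Submodule.smul_mem _ _ hw0W
      have hw1i0 : w1 i0 = 1 := by
        simp only [hw1def, Pi.smul_apply, smul_eq_mul]
        exact inv_mul_cancel₀ hi0
      have hw1supp : ∀ i, w1 i ≠ 0 ↔ w0 i ≠ 0 := by
        intro i
        simp only [hw1def, Pi.smul_apply, smul_eq_mul]
        constructor
        · intro h h0; rw [h0, mul_zero] at h; exact h rfl
        · intro h; exact mul_ne_zero (inv_ne_zero hi0) h
      -- w1 is constant
      have hw1const : ∀ i, d (w1 i) = 0 := by
        by_contra h
        push_neg at h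
        obtain ⟨i1, hi1⟩ := h
        set u : ι → F := fun i => d (w1 i) with hudef
        have huW : u ∈ W := hD w1 hw1W
        have hune : u ≠ 0 := fun h0 => hi1 (congrFun h0 i1)
        have hsub : (Finset.univ.filter fun i => u i ≠ 0) ⊆
            (Finset.univ.filter fun i => w0 i ≠ 0).erase i0 := by
          intro i hi
          simp only [Finset.mem_filter, Finset.mem_univ, true_and] at hi
          rw [Finset.mem_erase]
          constructor
          · rintro rfl
            rw [hudef] at hi
            simp only at hi
            rw [hw1i0] at hi
            have : d (1 : F) = 0 := by
              have h1 := hd.2 1 1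
              simp only [mul_one, one_mul] at h1
              exact (left_eq_add.mp h1)
            exact hi this
          · simp only [Finset.mem_filter, Finset.mem_univ, true_and]
            rw [← hw1supp]
            intro h0
            rw [hudef] at hi
            simp only at hi
            rw [h0] at hi
            exact hi hd.zero
        have hlt : ((Finset.univ.filter fun i => w0 i ≠ 0).erase i0).card <
            (Finset.univ.filter fun i => w0 i ≠ 0).card := by
          apply Finset.card_erase_lt_of_mem
          simp only [Finset.mem_filter, Finset.mem_univ, true_and]
          exact hi0
        have := hmin u huW hune
        have := Finset.card_le_card hsub
        omega
      have hi0s : i0 ∈ s := hsupp w0 hw0W i0 hi0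
      -- the smaller subspace
      set W' : Submodule F (ι → F) := W ⊓ LinearMap.ker (LinearMap.proj i0) with hW'def
      have hW'mem : ∀ v, v ∈ W' ↔ v ∈ W ∧ v i0 = 0 := by
        intro v
        rw [hW'def, Submodule.mem_inf, LinearMap.mem_ker, LinearMap.proj_apply]
      have hW'D : ∀ v ∈ W', (fun i => d (v i)) ∈ W' := by
        intro v hv
        rw [hW'mem] at hv ⊢
        refine ⟨hD v hv.1, ?_⟩
        rw [hv.2]
        exact hd.zero
      have hW'supp : ∀ v ∈ W', ∀ i, v i ≠ 0 → i ∈ s.erase i0 := by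
        intro v hv i hi
        rw [hW'mem] at hv
        rw [Finset.mem_erase]
        refine ⟨?_, hsupp v hv.1 i hi⟩
        rintro rfl
        exact hi hv.2
      have hcard : (s.erase i0).card ≤ N := by
        have := Finset.card_erase_of_mem hi0s
        omega
      have hIH := ih (s.erase i0) hcard W' hW'D hW'supp
      -- decompose w
      set u : ι → F := w - (w i0) • w1 with hudef
      have huW' : u ∈ W' := by
        rw [hW'mem]
        refine ⟨Submodule.sub_mem _ hw (Submodule.smul_mem _ _ hw1W), ?_⟩
        simp only [hudef, Pi.sub_apply, Pi.smul_apply, smul_eq_mul, hw1i0, mul_one, sub_self]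
      have hu : u ∈ Submodule.span F {v : ι → F | v ∈ W' ∧ ∀ i, d (v i) = 0} :=
        hIH u huW'
      have hmono : Submodule.span F {v : ι → F | v ∈ W' ∧ ∀ i, d (v i) = 0} ≤
          Submodule.span F {v : ι → F | v ∈ W ∧ ∀ i, d (v i) = 0} := by
        apply Submodule.span_mono
        intro v hv
        exact ⟨((hW'mem v).mp hv.1).1, hv.2⟩
      have hw1mem : w1 ∈ Submodule.span F {v : ι → F | v ∈ W ∧ ∀ i, d (v i) = 0} :=
        Submodule.subset_span ⟨hw1W, hw1const⟩
      have : w = (w i0) • w1 + u := by rw [hudef]; abel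
      rw [this]
      exact Submodule.add_mem _ (Submodule.smul_mem _ _ hw1mem) (hmono hu)
    · push_neg at hex
      have : w = 0 := by
        by_contra h
        exact h (hex w hw)
      rw [this]
      exact Submodule.zero_mem _

/-- Flattening a matrix into a function on pairs, as a linear map. -/
def mflat {F : Type*} [Field F] {n : ℕ} :
    Matrix (Fin n) (Fin n) F →ₗ[F] (Fin n × Fin n → F) where
  toFun A := fun p => A p.1 p.2
  map_add' := fun A B => rfl
  map_smul' := fun c A => rfl

lemma mflat_injective {F : Type*} [Field F] {n : ℕ} :
    Function.Injective (mflat (F := F) (n := n)) := by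
  intro A B h
  ext p q
  exact congrFun h (p, q)

end Aux

/-- Schur's characterization: `M` is of Type 1 iff all its entrywise derivatives
pairwise commute. -/
theorem type1_iff_all_derivatives_commute {F : Type*} [Field F] (d : F → F) (hd : IsDeriv d)
    {n : ℕ} (M : Matrix (Fin n) (Fin n) F) :
    IsType1 d M ↔
      ∀ i j : ℕ, M.map (d^[i]) * M.map (d^[j]) = M.map (d^[j]) * M.map (d^[i]) := by
  constructor
  · rintro ⟨k, f, C, hC0, hCc, rfl⟩ i j
    have key : ∀ m : ℕ, (∑ t, f t • C t).map (d^[m]) = ∑ t, (d^[m] (f t)) • C t := by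
      intro m
      ext p q
      simp only [Matrix.map_apply, Matrix.sum_apply, Matrix.smul_apply, smul_eq_mul]
      have hsum := map_sum (AddMonoidHom.mk' (d^[m]) (hd.iter_add m))
        (fun t => f t * C t p q) Finset.univ
      simp only [AddMonoidHom.mk'_apply] at hsum
      rw [hsum]
      exact Finset.sum_congr rfl fun t _ => hd.iter_mul_const m (f t) (C t p q) (hC0 t p q)
    rw [key i, key j, Finset.sum_mul_sum, Finset.sum_mul_sum, Finset.sum_comm]
    refine Finset.sum_congr rfl fun u _ => Finset.sum_congr rfl fun t _ => ?_
    rw [smul_mul_smul_comm, smul_mul_smul_comm, hCc u t, mul_comm]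
  · intro hcomm
    set Md : ℕ → Matrix (Fin n) (Fin n) F := fun i => M.map (d^[i]) with hMd
    set W : Submodule F (Matrix (Fin n) (Fin n) F) :=
      Submodule.span F (Set.range Md) with hW
    -- any two elements of W commute
    have hcomm1 : ∀ A ∈ W, ∀ i : ℕ, Md i * A = A * Md i := by
      intro A hA i
      induction hA using Submodule.span_induction with
      | mem x hx =>
        obtain ⟨j, rfl⟩ := hx
        exact hcomm i j
      | zero => simp
      | add x y _ _ hx hy => rw [mul_add, add_mul, hx, hy]
      | smul a x _ hx => rw [mul_smul_comm, smul_mul_assoc, hx]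
    have hcommW : ∀ A ∈ W, ∀ B ∈ W, A * B = B * A := by
      intro A hA B hB
      induction hA using Submodule.span_induction with
      | mem x hx =>
        obtain ⟨j, rfl⟩ := hx
        exact hcomm1 B hB j
      | zero => simp
      | add x y _ _ hx hy => rw [add_mul, mul_add, hx, hy]
      | smul a x _ hx => rw [smul_mul_assoc, mul_smul_comm, hx]
    -- pass to the function space
    set W' : Submodule F (Fin n × Fin n → F) := W.map mflat with hW'
    have hW'D : ∀ w ∈ W', (fun p => d (w p)) ∈ W' := by
      intro w hw
      obtain ⟨A, hA, rfl⟩ := hw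
      suffices h : (fun p => d (mflat A p)) ∈ W' ∧ mflat A ∈ W' from h.1
      induction hA using Submodule.span_induction with
      | mem x hx =>
        obtain ⟨j, rfl⟩ := hx
        constructor
        · have : (fun p => d (mflat (Md j) p)) = mflat (Md (j + 1)) := by
            funext p
            simp only [mflat, LinearMap.coe_mk, AddHom.coe_mk, hMd, Matrix.map_apply]
            exact (Function.iterate_succ_apply' d j (M p.1 p.2)).symm
          rw [this]
          exact ⟨Md (j + 1), Submodule.subset_span ⟨j + 1, rfl⟩, rfl⟩
        · exact ⟨Md j, Submodule.subset_span ⟨j, rfl⟩, rfl⟩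
      | zero =>
        constructor
        · have : (fun p => d ((mflat (0 : Matrix (Fin n) (Fin n) F)) p)) =
              mflat (0 : Matrix (Fin n) (Fin n) F) := by
            funext p
            simp only [map_zero]
            exact hd.zero
          rw [this]
          exact Submodule.zero_mem _
        · rw [map_zero]; exact Submodule.zero_mem _
      | add x y hx hy ihx ihy =>
        constructor
        · have : (fun p => d (mflat (x + y) p)) =
              (fun p => d (mflat x p)) + (fun p => d (mflat y p)) := by
            funext p
            simp only [map_add, Pi.add_apply]
            exact hd.1 _ _
          rw [this]
          exact Submodule.add_mem _ ihx.1 ihy.1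
        · rw [map_add]; exact Submodule.add_mem _ ihx.2 ihy.2
      | smul a x hx ihx =>
        constructor
        · have : (fun p => d (mflat (a • x) p)) =
              (d a) • mflat x + a • (fun p => d (mflat x p)) := by
            funext p
            simp only [map_smul, Pi.add_apply, Pi.smul_apply, smul_eq_mul]
            exact hd.2 a (mflat x p)
          rw [this]
          exact Submodule.add_mem _ (Submodule.smul_mem _ _ ihx.2)
            (Submodule.smul_mem _ _ ihx.1)
        · rw [map_smul]; exact Submodule.smul_mem _ _ ihx.2
    have hW'supp : ∀ w ∈ W', ∀ p : Fin n × Fin n, w p ≠ 0 → p ∈ (Finset.univ : Finset (Fin n × Fin n)) :=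
      fun _ _ p _ => Finset.mem_univ p
    have hMW : mflat M ∈ W' := by
      refine ⟨M, ?_, rfl⟩
      have : M = Md 0 := by
        rw [hMd]
        simp only [Function.iterate_zero]
        exact (Matrix.map_id M).symm
      rw [this]
      exact Submodule.subset_span ⟨0, rfl⟩
    have hspan := span_const_aux hd (Finset.univ : Finset (Fin n × Fin n)).card
      Finset.univ le_rfl W' hW'D hW'supp (mflat M) hMW
    rw [Submodule.mem_span_set'] at hspan
    obtain ⟨k, f, g, hg⟩ := hspan
    refine ⟨k, f, fun j => Matrix.of fun p q => (g j : Fin n × Fin n → F) (p, q), ?_, ?_, ?_⟩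
    · intro j p q
      exact (g j).2.2 (p, q)
    · -- commutation: each C j lies in W
      have hCW : ∀ j, (Matrix.of fun p q => (g j : Fin n × Fin n → F) (p, q)) ∈ W := by
        intro j
        obtain ⟨A, hA, hAeq⟩ := (g j).2.1
        have : (Matrix.of fun p q => (g j : Fin n × Fin n → F) (p, q)) = A := by
          ext p q
          rw [← hAeq]
          rfl
        rw [this]
        exact hA
      intro i j
      exact hcommW _ (hCW i) _ (hCW j)
    · apply mflat_injective
      rw [map_sum]
      have : ∀ j : Fin k, mflat (f j • Matrix.of fun p q => (g j : Fin n × Fin n → F) (p, q)) =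
          f j • (g j : Fin n × Fin n → F) := by
        intro j
        rw [map_smul]
        congr 1
      rw [Finset.sum_congr rfl fun j _ => this j]
      exact hg.symm
end

section
/- Let F be a differential field with constants K. If M ∈ F^{n×n} is nonderogatory (its minimal polynomial equals its characteristic polynomial) and M M' = M' M, then M is of Type 1, i.e., M is an F-linear combination of pairwise commuting constant matrices over K. -/
/-! A nonderogatory matrix has a cyclic vector: over any field, a finitely generated module over the
PID `F[X]` has an element whose annihilator is that of the module, here the ideal of the minimal
polynomial, whose degree is `n`. Hence everything commuting with `M`, in particular `M'`, lies in
`F[M]`. The Leibniz rule then makes the commutative algebra `F[M]` stable under entrywise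
differentiation, and a differentiation-stable subspace `W` of `F^{n×n}` is spanned by its constant
elements: pick entry functionals forming a basis of the dual of `W`; the dual basis `c` of `W` has
`0`/`1` coordinates, so each `c'` lies in `W` with all these coordinates zero, i.e. `c' = 0`. -/

open Polynomial Module

namespace Module.End

variable {F V : Type*} [Field F] [AddCommGroup V] [Module F V] [FiniteDimensional F V]

theorem exists_minpoly_dvd_of_aeval_apply_eq_zero (f : End F V) :
    ∃ v : V, ∀ q : F[X], aeval f q v = 0 → minpoly F f ∣ q := by
  obtain ⟨x, hx⟩ := exists_ker_toSpanSingleton_eq_annihilator F[X] (AEval' f)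
  obtain ⟨v, rfl⟩ := (AEval'.of f).surjective x
  refine ⟨v, fun q hq => ?_⟩
  have : q ∈ LinearMap.ker (LinearMap.toSpanSingleton F[X] _ (AEval'.of f v)) := by
    rw [LinearMap.mem_ker, LinearMap.toSpanSingleton_apply, ← AEval.of_aeval_smul]
    simp [hq]
  rwa [hx, ← span_minpoly_eq_annihilator, Ideal.mem_span_singleton] at this

theorem exists_surjective_aeval_apply {f : End F V}
    (hf : (minpoly F f).natDegree = finrank F V) :
    ∃ v : V, Function.Surjective fun q : F[X] => aeval f q v := by
  obtain ⟨v, hv⟩ := exists_minpoly_dvd_of_aeval_apply_eq_zero f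
  let L : degreeLT F (finrank F V) →ₗ[F] V :=
    LinearMap.applyₗ v ∘ₗ (aeval f).toLinearMap ∘ₗ (degreeLT F (finrank F V)).subtype
  have hL : Function.Injective L := by
    refine (injective_iff_map_eq_zero L).mpr fun q hq => Subtype.ext ?_
    refine eq_zero_of_dvd_of_degree_lt (hv q hq) ?_
    rw [degree_eq_natDegree (minpoly.ne_zero (Algebra.IsIntegral.isIntegral f)), hf]
    exact mem_degreeLT.mp q.2
  have hrank : finrank F (degreeLT F (finrank F V)) = finrank F V := by
    rw [(degreeLTEquiv F _).finrank_eq, finrank_fin_fun]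
  refine ⟨v, fun w => ?_⟩
  obtain ⟨q, rfl⟩ := (LinearMap.injective_iff_surjective_of_finrank_eq_finrank hrank).mp hL w
  exact ⟨q, rfl⟩

theorem mem_adjoin_singleton_of_commute {f g : End F V}
    (hf : (minpoly F f).natDegree = finrank F V) (hg : Commute f g) :
    g ∈ Algebra.adjoin F {f} := by
  obtain ⟨v, hv⟩ := exists_surjective_aeval_apply hf
  obtain ⟨q, hq⟩ : ∃ q : F[X], aeval f q v = g v := hv (g v)
  rw [Algebra.adjoin_singleton_eq_range_aeval]
  refine ⟨q, LinearMap.ext fun w => ?_⟩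
  obtain ⟨r, rfl⟩ := hv w
  have hgr : Commute g (aeval f r) :=
    Algebra.commute_of_mem_adjoin_singleton_of_commute (aeval_mem_adjoin_singleton F f) hg.symm
  change aeval f q (aeval f r v) = g (aeval f r v)
  rw [← mul_apply, ((Commute.all q r).map (aeval f)).eq, mul_apply, hq, ← mul_apply, ← hgr.eq,
    mul_apply]

end Module.End

theorem Matrix.mem_adjoin_singleton_of_commute {F m : Type*} [Field F] [Fintype m]
    [DecidableEq m] {M N : Matrix m m F} (hM : minpoly F M = M.charpoly) (hN : Commute M N) :
    N ∈ Algebra.adjoin F {M} := by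
  let e : Matrix m m F ≃ₐ[F] End F (m → F) := toLinAlgEquiv'
  have hdeg : (minpoly F (e M)).natDegree = finrank F (m → F) := by
    rw [minpoly.algEquiv_eq, hM, charpoly_natDegree_eq_dim, finrank_fintype_fun_eq_card]
  obtain ⟨N', hN', hN'N⟩ : e N ∈ (Algebra.adjoin F {M}).map e.toAlgHom := by
    rw [AlgHom.map_adjoin_singleton]
    exact End.mem_adjoin_singleton_of_commute hdeg (hN.map e)
  rwa [← e.injective hN'N]

namespace IsDeriv

variable {F : Type*} [Field F] {d : F → F}

theorem map_zero (hd : IsDeriv d) : d 0 = 0 := by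
  simpa using hd.1 0 0

theorem map_one (hd : IsDeriv d) : d 1 = 0 := by
  simpa using hd.2 1 1

theorem span_constants_eq_self {V ι : Type*} [AddCommGroup V] [Module F V]
    [FiniteDimensional F V] (hd : IsDeriv d) (ε : ι → V →ₗ[F] F)
    (hε : ∀ v, (∀ i, ε i v = 0) → v = 0) {D : V → V}
    (hD : ∀ i v, ε i (D v) = d (ε i v)) {W : Submodule F V} (hW : ∀ w ∈ W, D w ∈ W) :
    Submodule.span F {w | w ∈ W ∧ D w = 0} = W := by
  classical
  refine le_antisymm (Submodule.span_le.mpr fun w hw => hw.1) fun w hw => ?_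
  let ε' : ι → Dual F W := fun i => (ε i).domRestrict W
  have hspan : Submodule.span F (Set.range ε') = ⊤ := by
    refine eq_top_iff.mpr fun φ _ => FiniteDimensional.mem_span_of_iInf_ker_le_ker fun x hx => ?_
    have hx0 : x = 0 := Subtype.ext <| hε x fun i => (Submodule.mem_iInf _).mp hx i
    simp [hx0]
  obtain ⟨κ, a, -, hsp, hli⟩ := exists_linearIndependent' F ε'
  let b : Basis κ F (Dual F W) := Basis.mk hli (by rw [hsp, hspan])
  have : Finite κ := Module.Finite.finite_basis b
  let c : Basis κ F W := b.dualBasis.map (evalEquiv F W).symm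
  have hbc : ∀ k j, b k (c j) = if k = j then 1 else 0 := fun k j => by
    simp [c, Finsupp.single_apply]
  have hc (j : κ) : D (c j) = 0 := by
    let x : W := ⟨D (c j), hW _ (c j).2⟩
    suffices x = 0 from congrArg Subtype.val this
    refine (forall_dual_apply_eq_zero_iff F x).mp fun φ => LinearMap.congr_fun
      (b.ext (f₁ := Dual.eval F W x) (f₂ := 0) fun k => ?_) φ
    have : d (b k (c j)) = 0 := by rw [hbc]; split_ifs <;> simp [hd.map_zero, hd.map_one]
    simpa [b, ε', x, hD] using this
  have hcW : Set.range (W.subtype ∘ c) ⊆ {w | w ∈ W ∧ D w = 0} := by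
    rintro _ ⟨j, rfl⟩
    exact ⟨(c j).2, hc j⟩
  refine Submodule.span_mono hcW ?_
  rwa [Set.range_comp, ← Submodule.map_span, c.span_eq, Submodule.map_top,
    Submodule.range_subtype]

variable {m : Type*}

theorem matrix_map_add (hd : IsDeriv d) (A B : Matrix m m F) :
    (A + B).map d = A.map d + B.map d := by
  ext i j
  exact hd.1 _ _

variable [Fintype m]

theorem matrix_map_mul (hd : IsDeriv d) (A B : Matrix m m F) :
    (A * B).map d = A.map d * B + A * B.map d := by
  ext i j
  simp only [Matrix.map_apply, Matrix.mul_apply, Matrix.add_apply, ← Finset.sum_add_distrib,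
    ← hd.2]
  exact map_sum (AddMonoidHom.mk' d hd.1) _ _

variable [DecidableEq m]

theorem matrix_map_algebraMap (hd : IsDeriv d) (c : F) :
    (algebraMap F (Matrix m m F) c).map d = algebraMap F _ (d c) := by
  simp [Matrix.algebraMap_eq_diagonal, Matrix.diagonal_map hd.map_zero]

theorem map_mem_adjoin_singleton (hd : IsDeriv d) {M : Matrix m m F}
    (hM : M.map d ∈ Algebra.adjoin F {M}) {A : Matrix m m F} (hA : A ∈ Algebra.adjoin F {M}) :
    A.map d ∈ Algebra.adjoin F {M} := by
  induction hA using Algebra.adjoin_induction with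
  | mem x hx => rwa [Set.mem_singleton_iff.mp hx]
  | algebraMap c => rw [hd.matrix_map_algebraMap]; exact Subalgebra.algebraMap_mem _ _
  | add x y _ _ hx hy => rw [hd.matrix_map_add]; exact add_mem hx hy
  | mul x y hx' hy' hx hy =>
    rw [hd.matrix_map_mul]; exact add_mem (mul_mem hx hy') (mul_mem hx' hy)

end IsDeriv

/-- A nonderogatory matrix over a differential field that commutes with its
derivative is of Type 1. -/
theorem nonderogatory_is_type1 {F : Type*} [Field F] (d : F → F) (hd : IsDeriv d)
    {n : ℕ} (M : Matrix (Fin n) (Fin n) F)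
    (hnd : minpoly F M = M.charpoly)
    (hcomm : M * M.map d = M.map d * M) :
    IsType1 d M := by
  set A := Algebra.adjoin F {M}
  have hstable : ∀ B ∈ A, B.map d ∈ A :=
    fun B => hd.map_mem_adjoin_singleton (Matrix.mem_adjoin_singleton_of_commute hnd hcomm)
  have hspan := hd.span_constants_eq_self
    (fun ij : Fin n × Fin n => Matrix.entryLinearMap F F ij.1 ij.2)
    (fun B hB => Matrix.ext fun i j => hB (i, j)) (fun _ _ => rfl)
    (W := Subalgebra.toSubmodule A) hstable
  have hM : M ∈ Submodule.span F {B | B ∈ Subalgebra.toSubmodule A ∧ B.map d = 0} := by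
    rw [hspan]
    exact Algebra.self_mem_adjoin_singleton F M
  obtain ⟨k, f, C, hC⟩ := Submodule.mem_span_set'.mp hM
  refine ⟨k, f, fun j => C j, fun j p q => congr_fun₂ (C j).2.2 p q, fun i j => ?_, hC.symm⟩
  exact (Algebra.commute_of_mem_adjoin_singleton_of_commute (C j).2.1
    (Algebra.commute_of_mem_adjoin_self (C i).2.1).symm).eq
end

section
/- Let F be a differential field with constants K. If M ∈ F^{n×n} satisfies M M' = M' M and is F-diagonalizable, then M is of Type 1: M = Σ f_j C_j with f_j ∈ F and pairwise commuting constant matrices C_j ∈ K^{n×n}. -/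
/-- If `M M' = M' M` and `M` is diagonalizable over `F`, then `M` is of Type 1. -/
theorem diagonalizable_is_type1 {F : Type*} [Field F]
    (d : F → F) (hd : IsDeriv d)
    {n : ℕ} (M : Matrix (Fin n) (Fin n) F)
    (hcomm : M * M.map d = M.map d * M)
    (hdiag : ∃ S : Matrix (Fin n) (Fin n) F, IsUnit S ∧ (S⁻¹ * M * S).IsDiag) :
    IsType1 d M := by
  classical
  obtain ⟨S, hS, hDg⟩ := hdiag
  have hSd : IsUnit S.det := (Matrix.isUnit_iff_isUnit_det S).mp hS
  have hSi : S⁻¹ * S = 1 := Matrix.nonsing_inv_mul S hSd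
  have hSi' : S * S⁻¹ = 1 := Matrix.mul_nonsing_inv S hSd
  set D := S⁻¹ * M * S with hDdef
  -- basic derivative facts
  have hd0 : d 0 = 0 := by have := hd.1 0 0; simpa using this
  have mapd_mul : ∀ A B : Matrix (Fin n) (Fin n) F,
      (A * B).map d = A.map d * B + A * B.map d := by
    have hdsum : ∀ (s : Finset (Fin n)) (g : Fin n → F),
        d (∑ x ∈ s, g x) = ∑ x ∈ s, d (g x) :=
      fun s g => map_sum (AddMonoidHom.mk' d hd.1) g s
    intro A B
    ext i j
    simp only [Matrix.map_apply, Matrix.mul_apply, Matrix.add_apply]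
    rw [hdsum, ← Finset.sum_add_distrib]
    exact Finset.sum_congr rfl fun k _ => hd.2 _ _
  -- conjugation helpers
  have conj_mul : ∀ A B : Matrix (Fin n) (Fin n) F,
      (S⁻¹ * A * S) * (S⁻¹ * B * S) = S⁻¹ * (A * B) * S := by
    intro A B
    simp only [Matrix.mul_assoc]
    rw [← Matrix.mul_assoc S S⁻¹, hSi', Matrix.one_mul]
  have conj_mul' : ∀ A B : Matrix (Fin n) (Fin n) F,
      (S * A * S⁻¹) * (S * B * S⁻¹) = S * (A * B) * S⁻¹ := by
    intro A B
    simp only [Matrix.mul_assoc]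
    rw [← Matrix.mul_assoc S⁻¹ S, hSi, Matrix.one_mul]
  have hM : M = S * D * S⁻¹ := by
    rw [hDdef]
    simp only [Matrix.mul_assoc]
    rw [← Matrix.mul_assoc S S⁻¹, hSi', Matrix.one_mul, Matrix.mul_one]
  -- spectral projections
  set P : F → Matrix (Fin n) (Fin n) F :=
    fun c => Matrix.diagonal (fun i => if D i i = c then (1:F) else 0) with hPdef
  set E : F → Matrix (Fin n) (Fin n) F := fun c => S * P c * S⁻¹ with hEdef
  -- a matrix commuting with the diagonal matrix D commutes with each P c
  have block : ∀ N : Matrix (Fin n) (Fin n) F, N * D = D * N →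
      ∀ c : F, N * P c = P c * N := by
    intro N hN c
    ext i j
    rw [hPdef]
    rw [Matrix.mul_diagonal, Matrix.diagonal_mul]
    by_cases h0 : N i j = 0
    · simp [h0]
    · have hij : N i j * D j j = D i i * N i j := by
        have h := congrFun (congrFun hN i) j
        rwa [Matrix.mul_apply, Matrix.mul_apply,
          Finset.sum_eq_single j (fun k _ hk => by rw [hDg hk, mul_zero])
            (fun h => absurd (Finset.mem_univ j) h),
          Finset.sum_eq_single i (fun k _ hk => by rw [hDg hk.symm, zero_mul])
            (fun h => absurd (Finset.mem_univ i) h)] at h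
      have heq : D j j = D i i := by
        have : N i j * D j j = N i j * D i i := by rw [hij, mul_comm]
        exact mul_left_cancel₀ h0 this
      rw [heq, mul_comm]
  -- anything commuting with M commutes with every E c
  have commE : ∀ X : Matrix (Fin n) (Fin n) F, X * M = M * X →
      ∀ c : F, X * E c = E c * X := by
    intro X hX c
    have hN : (S⁻¹ * X * S) * D = D * (S⁻¹ * X * S) := by
      rw [hDdef, conj_mul, conj_mul, hX]
    have hPN := block _ hN c
    have hXr : X = S * (S⁻¹ * X * S) * S⁻¹ := by
      simp only [Matrix.mul_assoc]
      rw [← Matrix.mul_assoc S S⁻¹, hSi', Matrix.one_mul, Matrix.mul_one]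
    calc X * E c = (S * (S⁻¹ * X * S) * S⁻¹) * (S * P c * S⁻¹) := by
          rw [← hXr, hEdef]
      _ = S * ((S⁻¹ * X * S) * P c) * S⁻¹ := conj_mul' _ _
      _ = S * (P c * (S⁻¹ * X * S)) * S⁻¹ := by rw [hPN]
      _ = (S * P c * S⁻¹) * (S * (S⁻¹ * X * S) * S⁻¹) := (conj_mul' _ _).symm
      _ = E c * X := by rw [← hXr, hEdef]
  -- idempotence
  have hPP : ∀ c, P c * P c = P c := by
    intro c
    rw [hPdef]
    dsimp only
    rw [Matrix.diagonal_mul_diagonal]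
    refine congrArg Matrix.diagonal (funext fun i => ?_)
    by_cases h : D i i = c <;> simp [h]
  have hEE : ∀ c, E c * E c = E c := by
    intro c; rw [hEdef]; dsimp only; rw [conj_mul', hPP]
  have hME : ∀ c, M * E c = E c * M := fun c => commE M rfl c
  have hM'E : ∀ c, M.map d * E c = E c * M.map d := fun c => commE _ hcomm.symm c
  -- derivative of each E c vanishes
  have hdE : ∀ c, (E c).map d = 0 := by
    intro c
    have h1 : M.map d * E c + M * (E c).map d = (E c).map d * M + E c * M.map d := by
      rw [← mapd_mul, ← mapd_mul, hME c]
    rw [hM'E c] at h1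
    have h2 : M * (E c).map d = (E c).map d * M := by
      rw [add_comm (E c * M.map d)] at h1
      exact add_right_cancel h1
    have h3 : (E c).map d * E c = E c * (E c).map d := commE _ h2.symm c
    have h4 : (E c).map d * E c + E c * (E c).map d = (E c).map d := by
      rw [← mapd_mul, hEE c]
    rw [h3] at h4
    have h6 := congrArg (fun X => E c * X) h4
    simp only [mul_add, ← Matrix.mul_assoc, hEE c] at h6
    have h5 : E c * (E c).map d = 0 := add_eq_left.mp h6
    rw [h5, add_zero] at h4
    exact h4.symm
  -- construct the decomposition
  set rep : Fin n → Prop := fun i => ∀ j, D j j = D i i → i ≤ j with hrep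
  refine ⟨n, fun i => D i i,
    fun i => if rep i then E (D i i) else 0, ?_, ?_, ?_⟩
  · intro j p q
    show d ((if rep j then E (D j j) else 0) p q) = 0
    by_cases h : rep j
    · rw [if_pos h]
      have := congrFun (congrFun (hdE (D j j)) p) q
      simpa [Matrix.map_apply] using this
    · rw [if_neg h]
      simpa using hd0
  · intro i j
    have hPc : ∀ a b : F, P a * P b = P b * P a := by
      intro a b
      rw [hPdef]; dsimp only
      rw [Matrix.diagonal_mul_diagonal, Matrix.diagonal_mul_diagonal]
      exact congrArg Matrix.diagonal (funext fun k => mul_comm _ _)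
    have hEc : ∀ a b : F, E a * E b = E b * E a := by
      intro a b
      rw [hEdef]; dsimp only; rw [conj_mul', conj_mul', hPc]
    show (if rep i then E (D i i) else 0) * (if rep j then E (D j j) else 0)
        = (if rep j then E (D j j) else 0) * (if rep i then E (D i i) else 0)
    by_cases hi : rep i <;> by_cases hj : rep j
    · rw [if_pos hi, if_pos hj, hEc]
    · rw [if_pos hi, if_neg hj, mul_zero, zero_mul]
    · rw [if_neg hi, if_pos hj, zero_mul, mul_zero]
    · rw [if_neg hi, if_neg hj]
  · -- the sum equals M
    have hCQ : ∀ i : Fin n, (if rep i then E (D i i) else 0)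
        = S * (if rep i then P (D i i) else 0) * S⁻¹ := by
      intro i; by_cases h : rep i <;> simp [h, hEdef]
    have hsum : ∑ j, (D j j) • (if rep j then E (D j j) else 0)
        = S * (∑ j, (D j j) • (if rep j then P (D j j) else 0)) * S⁻¹ := by
      rw [Finset.mul_sum, Finset.sum_mul]
      refine Finset.sum_congr rfl fun j _ => ?_
      rw [hCQ j, Matrix.mul_smul, Matrix.smul_mul]
    have hq : ∑ j, (D j j) • (if rep j then P (D j j) else 0) = D := by
      ext p q
      rw [Matrix.sum_apply]
      by_cases hpq : p = q
      · subst hpq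
        have hne : (Finset.univ.filter (fun j => D j j = D p p)).Nonempty :=
          ⟨p, by simp⟩
        set i₀ := (Finset.univ.filter (fun j => D j j = D p p)).min' hne with hi₀
        have hi₀mem := (Finset.univ.filter (fun j => D j j = D p p)).min'_mem hne
        rw [Finset.mem_filter] at hi₀mem
        have hi₀val : D i₀ i₀ = D p p := hi₀mem.2
        have hi₀rep : rep i₀ := by
          intro j hj
          exact Finset.min'_le _ j (by simp [hj, hi₀val])
        rw [Finset.sum_eq_single i₀]
        · rw [Matrix.smul_apply, if_pos hi₀rep, hPdef]
          dsimp only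
          rw [Matrix.diagonal_apply_eq, if_pos hi₀val.symm, smul_eq_mul, mul_one, hi₀val]
        · intro j _ hji₀
          by_cases hj : rep j
          · by_cases hval : D j j = D p p
            · exfalso
              apply hji₀
              have h1 : i₀ ≤ j := Finset.min'_le _ j (by simp [hval])
              have h2 : j ≤ i₀ := hj i₀ (by rw [hi₀val, hval])
              exact le_antisymm h2 h1
            · have hval' : ¬ (D p p = D j j) := fun h => hval h.symm
              rw [Matrix.smul_apply, if_pos hj, hPdef]
              dsimp only
              rw [Matrix.diagonal_apply_eq, if_neg hval', smul_zero]
          · rw [Matrix.smul_apply, if_neg hj, Matrix.zero_apply, smul_zero]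
        · intro h; exact absurd (Finset.mem_univ i₀) h
      · rw [hDg hpq]
        refine Finset.sum_eq_zero fun j _ => ?_
        rw [Matrix.smul_apply]
        by_cases hj : rep j
        · rw [if_pos hj, hPdef]
          dsimp only
          rw [Matrix.diagonal_apply_ne _ hpq, smul_zero]
        · rw [if_neg hj, Matrix.zero_apply, smul_zero]
    rw [hsum, hq, ← hM]
end
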